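/- Let M be a matroid on a finite linearly ordered set E. The set of independent sets of M is the disjoint union, over all bases B of M, of the boolean intervals [B \ Int(B), B]; consequently the number of independent sets equals t(M;2,1). -/

import Mathlib

namespace AB
open Set

variable {α : Type*}

/-- A circuit of a matroid: a minimal dependent set. -/
def Circuit (M : Matroid α) (C : Set α) : Prop :=
  M.Dep C ∧ ∀ D, D ⊂ C → M.Indep D

/-- A cocircuit: a circuit of the dual matroid. -/
def Cocircuit (M : Matroid α) (C : Set α) : Prop := Circuit M✶ C

/-- `b` is internally active for the basis `B`: `b ∈ B` and `b` is the minimum of the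
fundamental cocircuit `C*(B;b)`, the unique cocircuit contained in `(M.E \ B) ∪ {b}`. -/
def IntActive [LinearOrder α] (M : Matroid α) (B : Set α) (b : α) : Prop :=
  b ∈ B ∧ ∃ C, Cocircuit M C ∧ C ⊆ (M.E \ B) ∪ {b} ∧ b ∈ C ∧ ∀ x ∈ C, b ≤ x

/-- `e` is externally active for the basis `B`: `e ∈ M.E \ B` and `e` is the minimum of the
fundamental circuit `C(B;e)`, the unique circuit contained in `B ∪ {e}`. -/
def ExtActive [LinearOrder α] (M : Matroid α) (B : Set α) (e : α) : Prop :=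
  e ∈ M.E \ B ∧ ∃ C, Circuit M C ∧ C ⊆ B ∪ {e} ∧ e ∈ C ∧ ∀ x ∈ C, e ≤ x

/-- `Int(B)`, the set of internally active elements of `B`. -/
def IntSet [LinearOrder α] (M : Matroid α) (B : Set α) : Set α := {b | IntActive M B b}

/-- `Ext(B)`, the set of externally active elements of `B`. -/
def ExtSet [LinearOrder α] (M : Matroid α) (B : Set α) : Set α := {e | ExtActive M B e}

end AB

attribute [local instance] Classical.propDecidable

namespace AB
/-- The Tutte polynomial of an ordered matroid, evaluated at `(x, y)`, via Crapo's
expression in terms of basis activities: `t(M;x,y) = Σ_B x^|Int(B)| y^|Ext(B)|`. -/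
noncomputable def tutteEval {α : Type*} [Fintype α] [LinearOrder α]
    (M : Matroid α) (x y : ℤ) : ℤ :=
  ∑ B ∈ Finset.univ.powerset.filter (fun B : Finset α => M.IsBase ↑B),
    x ^ (AB.IntSet M ↑B).ncard * y ^ (AB.ExtSet M ↑B).ncard
end AB


/-! Since the fundamental cocircuit `C*(B;b)` consists of `b` and the `x ∉ B` for which
`B - b + x` is a base, `b ∈ B` is internally active iff no exchange of `b` for a smaller element
yields a base. Given an independent `A`, a base `B ⊇ A` of least weight (for weights increasing
along the order) therefore has only active elements outside `A`. If `A` lay in the intervals of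
two bases `B₁ ≠ B₂`, the largest element of `B₁ ∆ B₂` would be active in the base containing it,
yet basis exchange replaces it by a smaller element of the other base. Finally the interval of
`B` has `2 ^ |Int(B)|` elements, and these sum to `t(M;2,1)`. -/

lemma Finite.exists_strictMono_nat (β : Type*) [Finite β] [LinearOrder β] :
    ∃ f : β → ℕ, StrictMono f := by
  have := Fintype.ofFinite β
  exact ⟨fun a ↦ (Fintype.orderIsoFinOfCardEq β rfl).symm a, fun a b h ↦ by simpa using h⟩

lemma Set.Finite.finsum_mem_insert_sdiff_lt {α : Type*} {f : α → ℕ} {B : Set α} {b x : α}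
    (hB : B.Finite) (hb : b ∈ B) (hx : x ∉ B) (hfxb : f x < f b) :
    ∑ᶠ a ∈ insert x (B \ {b}), f a < ∑ᶠ a ∈ B, f a := by
  have hB' : B = insert b (B \ {b}) := by rw [Set.insert_sdiff_singleton, Set.insert_eq_of_mem hb]
  conv_rhs => rw [hB', finsum_mem_insert f (show b ∉ B \ {b} from fun h ↦ h.2 rfl) hB.sdiff]
  rw [finsum_mem_insert f (show x ∉ B \ {b} from fun h ↦ hx h.1) hB.sdiff]
  omega

namespace Matroid

open Set

variable {α : Type*} {M : Matroid α} {B : Set α} {b x : α}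

lemma IsBase.mem_fundCocircuit_iff_isBase (hB : M.IsBase B) (hb : b ∈ B) (hx : x ∉ B) :
    x ∈ M.fundCocircuit b B ↔ M.IsBase (insert x (B \ {b})) := by
  have hxb : x ≠ b := ne_of_mem_of_not_mem hb hx |>.symm
  by_cases hxE : x ∈ M.E
  · rw [hB.mem_fundCocircuit_iff_mem_fundCircuit,
      hB.indep.mem_fundCircuit_iff (by rwa [hB.closure_eq]) hx,
      ← insert_sdiff_singleton_comm hxb]
    exact ⟨hB.exchange_isBase_of_indep hx, IsBase.indep⟩
  refine iff_of_false (fun hx ↦ ?_) (fun h ↦ hxE (h.subset_ground (mem_insert _ _)))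
  obtain rfl | hx := M.fundCocircuit_subset_insert_compl b B hx
  exacts [hxb rfl, hxE hx.1]

end Matroid

namespace AB

open Set Matroid
open scoped symmDiff

variable {α : Type*} {M : Matroid α} {B B₁ B₂ C : Set α} {b : α}

lemma circuit_iff_isCircuit : Circuit M C ↔ M.IsCircuit C :=
  isCircuit_iff_forall_ssubset.symm

lemma cocircuit_iff_isCocircuit : Cocircuit M C ↔ M.IsCocircuit C :=
  circuit_iff_isCircuit

variable [LinearOrder α]

lemma intActive_iff_forall_fundCocircuit (hB : M.IsBase B) :
    IntActive M B b ↔ b ∈ B ∧ ∀ x ∈ M.fundCocircuit b B, b ≤ x := by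
  refine ⟨fun ⟨hb, C, hC, hCB, _, hmin⟩ ↦ ⟨hb, ?_⟩, fun ⟨hb, hmin⟩ ↦ ⟨hb, ?_⟩⟩
  · have hCf : C = M✶.fundCircuit b (M✶.E \ B) :=
      (cocircuit_iff_isCocircuit.1 hC).isCircuit.eq_fundCircuit_of_subset
        hB.compl_isBase_dual.indep (by simpa [union_comm] using hCB)
    rwa [fundCocircuit, ← hCf]
  · refine ⟨_, cocircuit_iff_isCocircuit.2 (fundCocircuit_isCocircuit hb hB), ?_,
      mem_fundCocircuit .., hmin⟩
    simpa [union_comm] using M.fundCocircuit_subset_insert_compl b B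

lemma intActive_iff_forall_lt (hB : M.IsBase B) (hb : b ∈ B) :
    IntActive M B b ↔ ∀ x ∉ B, x < b → ¬ M.IsBase (insert x (B \ {b})) := by
  rw [intActive_iff_forall_fundCocircuit hB, and_iff_right hb]
  refine ⟨fun h x hx hxb hxB ↦ ?_, fun h x hxC ↦ ?_⟩
  · exact (h x ((hB.mem_fundCocircuit_iff_isBase hb hx).2 hxB)).not_gt hxb
  by_cases hx : x ∈ B
  · obtain rfl : x = b := (M.fundCocircuit_inter_eq hb).subset ⟨hxC, hx⟩
    rfl
  exact le_of_not_gt fun hxb ↦ h x hx hxb ((hB.mem_fundCocircuit_iff_isBase hb hx).1 hxC)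

lemma intSet_subset : IntSet M B ⊆ B :=
  fun _ hb ↦ hb.1

lemma exists_gt_of_sdiff_intSet_subset (hB₁ : M.IsBase B₁) (hB₂ : M.IsBase B₂)
    (h : B₁ \ IntSet M B₁ ⊆ B₂) (hb : b ∈ B₁ \ B₂) : ∃ y ∈ B₂ \ B₁, b < y := by
  have hact : IntActive M B₁ b := by_contra fun hb' ↦ hb.2 (h ⟨hb.1, hb'⟩)
  obtain ⟨y, hy, hyB⟩ := hB₁.exchange hB₂ hb
  refine ⟨y, hy, lt_of_not_ge fun hyb ↦ ?_⟩
  exact (intActive_iff_forall_lt hB₁ hb.1).1 hact y hy.2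
    (hyb.lt_of_ne (ne_of_mem_of_not_mem hb.1 hy.2).symm) hyB

section Finite

variable [Finite α]

/-- A base containing `A` of minimal weight has all its elements outside `A` internally active:
exchanging an inactive one for a smaller element would lower the weight. -/
lemma exists_isBase_sdiff_intSet_subset {A : Set α} (hA : M.Indep A) :
    ∃ B, M.IsBase B ∧ B \ IntSet M B ⊆ A ∧ A ⊆ B := by
  obtain ⟨f, hf⟩ := Finite.exists_strictMono_nat α
  obtain ⟨B, ⟨hB, hAB⟩, hmin⟩ := exists_min_image {B | M.IsBase B ∧ A ⊆ B}
    (fun B ↦ ∑ᶠ a ∈ B, f a) (toFinite _) hA.exists_isBase_superset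
  refine ⟨B, hB, fun b ⟨hbB, hbI⟩ ↦ by_contra fun hbA ↦ hbI ?_, hAB⟩
  refine (intActive_iff_forall_lt hB hbB).2 fun x hx hxb hxB ↦ ?_
  have hAx : A ⊆ insert x (B \ {b}) := fun a ha ↦
    mem_insert_of_mem _ ⟨hAB ha, fun (hab : a = b) ↦ hbA (hab ▸ ha)⟩
  exact (hmin _ ⟨hxB, hAx⟩).not_gt ((toFinite B).finsum_mem_insert_sdiff_lt hbB hx (hf hxb))

lemma indep_iff_exists_isBase_sdiff_intSet_subset {A : Set α} :
    M.Indep A ↔ ∃ B, M.IsBase B ∧ B \ IntSet M B ⊆ A ∧ A ⊆ B :=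
  ⟨exists_isBase_sdiff_intSet_subset, fun ⟨_, hB, _, hAB⟩ ↦ hB.indep.subset hAB⟩

/-- Taking `b` maximal in `B₁ ∆ B₂`, whichever base contains it, `b` is internally active
there and an exchange produces a larger element of `B₁ ∆ B₂`. -/
lemma eq_of_sdiff_intSet_subset (hB₁ : M.IsBase B₁) (hB₂ : M.IsBase B₂)
    (h₁ : B₁ \ IntSet M B₁ ⊆ B₂) (h₂ : B₂ \ IntSet M B₂ ⊆ B₁) : B₁ = B₂ := by
  by_contra hne
  obtain ⟨b, hb, hmax⟩ :=
    exists_max_image (B₁ ∆ B₂) id (toFinite _) (symmDiff_nonempty.2 hne)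
  obtain ⟨y, hy, hby⟩ : ∃ y ∈ B₁ ∆ B₂, b < y := by
    rcases hb with hb | hb
    · obtain ⟨y, hy, hby⟩ := exists_gt_of_sdiff_intSet_subset hB₁ hB₂ h₁ hb
      exact ⟨y, Or.inr hy, hby⟩
    · obtain ⟨y, hy, hby⟩ := exists_gt_of_sdiff_intSet_subset hB₂ hB₁ h₂ hb
      exact ⟨y, Or.inl hy, hby⟩
  exact (hmax y hy).not_gt hby

end Finite

end AB

namespace AB

open Finset

variable {α : Type*} [LinearOrder α] {M : Matroid α}

noncomputable def intFinset (M : Matroid α) (B : Finset α) : Finset α :=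
  {b ∈ B | b ∈ IntSet M ↑B}

lemma coe_intFinset (B : Finset α) : ↑(intFinset M B) = IntSet M ↑B := by
  ext x
  simp only [intFinset, coe_filter, Set.mem_ofPred_eq]
  exact and_iff_right_of_imp fun hx ↦ intSet_subset hx

lemma mem_Icc_intFinset_iff {A B : Finset α} :
    A ∈ Icc (B \ intFinset M B) B ↔ ↑B \ IntSet M ↑B ⊆ (↑A : Set α) ∧ (↑A : Set α) ⊆ ↑B := by
  rw [mem_Icc, ← coe_intFinset, ← coe_sdiff, coe_subset, coe_subset]

lemma card_Icc_intFinset (B : Finset α) :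
    #(Icc (B \ intFinset M B) B) = 2 ^ (IntSet M ↑B).ncard := by
  have hsub : intFinset M B ⊆ B := filter_subset _ _
  rw [card_Icc_finset sdiff_subset, card_sdiff_of_subset hsub,
    Nat.sub_sub_self (card_le_card hsub), ← coe_intFinset, Set.ncard_coe_finset]

variable [Fintype α]

lemma filter_indep_eq_biUnion :
    ({A | M.Indep ↑A} : Finset (Finset α)) =
      ({B | M.IsBase ↑B} : Finset (Finset α)).biUnion fun B ↦ Icc (B \ intFinset M B) B := by
  ext A
  simp only [mem_filter_univ, mem_biUnion, mem_Icc_intFinset_iff,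
    indep_iff_exists_isBase_sdiff_intSet_subset]
  refine ⟨fun ⟨B, hB, hBA, hAB⟩ ↦ ?_, fun ⟨B, hB, hA⟩ ↦ ⟨B, hB, hA⟩⟩
  lift B to Finset α using Set.toFinite B
  exact ⟨B, hB, hBA, hAB⟩

lemma card_indep_eq_sum :
    #({A | M.Indep ↑A} : Finset (Finset α)) =
      ∑ B ∈ ({B | M.IsBase ↑B} : Finset (Finset α)), 2 ^ (IntSet M ↑B).ncard := by
  rw [filter_indep_eq_biUnion, card_biUnion]
  · exact sum_congr rfl fun B _ ↦ card_Icc_intFinset (M := M) B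
  intro B₁ hB₁ B₂ hB₂ hne
  refine disjoint_left.2 fun A hA₁ hA₂ ↦ hne (coe_injective ?_)
  rw [mem_Icc_intFinset_iff] at hA₁ hA₂
  exact eq_of_sdiff_intSet_subset ((mem_filter_univ B₁).1 hB₁) ((mem_filter_univ B₂).1 hB₂)
    (hA₁.1.trans hA₂.2) (hA₂.1.trans hA₁.2)

end AB

theorem stmt_8_general {α : Type*} [Fintype α] [LinearOrder α] (M : Matroid α) :
    (∀ A : Set α, M.Indep A ↔ ∃ B : Set α, M.IsBase B ∧ B \ AB.IntSet M B ⊆ A ∧ A ⊆ B) ∧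
    (∀ B₁ B₂ : Set α, M.IsBase B₁ → M.IsBase B₂ → B₁ ≠ B₂ →
      ∀ A : Set α, ¬ ((B₁ \ AB.IntSet M B₁ ⊆ A ∧ A ⊆ B₁) ∧
        (B₂ \ AB.IntSet M B₂ ⊆ A ∧ A ⊆ B₂))) ∧
    (((Finset.univ.powerset.filter (fun A : Finset α => M.Indep ↑A)).card : ℤ)
      = AB.tutteEval M 2 1) := by
  refine ⟨fun _ ↦ AB.indep_iff_exists_isBase_sdiff_intSet_subset,
    fun B₁ B₂ hB₁ hB₂ hne A ⟨⟨h₁, hA₁⟩, ⟨h₂, hA₂⟩⟩ ↦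
      hne (AB.eq_of_sdiff_intSet_subset hB₁ hB₂ (h₁.trans hA₂) (h₂.trans hA₁)), ?_⟩
  rw [AB.tutteEval, Finset.powerset_univ, AB.card_indep_eq_sum]
  simp only [one_pow, mul_one]
  push_cast
  rfl

/-- The independent sets of `M` are the disjoint union, over all bases
`B`, of the boolean intervals `[B \ Int(B), B]`; consequently the number of independent
sets equals `t(M;2,1)`. -/
theorem stmt_8 {α : Type*} [Fintype α] [LinearOrder α] (M : Matroid α)
    (hE : M.E = Set.univ) :
    (∀ A : Set α, M.Indep A ↔ ∃ B : Set α, M.IsBase B ∧ B \ AB.IntSet M B ⊆ A ∧ A ⊆ B) ∧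
    (∀ B₁ B₂ : Set α, M.IsBase B₁ → M.IsBase B₂ → B₁ ≠ B₂ →
      ∀ A : Set α, ¬ ((B₁ \ AB.IntSet M B₁ ⊆ A ∧ A ⊆ B₁) ∧
        (B₂ \ AB.IntSet M B₂ ⊆ A ∧ A ⊆ B₂))) ∧
    (((Finset.univ.powerset.filter (fun A : Finset α => M.Indep ↑A)).card : ℤ)
      = AB.tutteEval M 2 1) :=
  stmt_8_general M
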